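/- arXiv:1402.6355 — 4 statements merged into one kernel-verified Lean document; each statement's English description precedes it below -/
import Mathlib

section
/- Let Ω be a field and let (E_n)_{n≥0} and (F_n)_{n≥0} be two increasing sequences of subfields of Ω such that E_n ⊆ F_n, E_n ⊆ E_{n+1} and F_n ⊆ F_{n+1} for every n. Let d and t be natural numbers with d ≥ 2 and t ≥ 2, and assume: (i) F_0 is a finite extension of E_0 with [F_0 : E_0] ≥ 2; (ii) for every n, F_{n+1}/F_n is finite of degree [F_{n+1} : F_n] = d; (iii) for every n, E_{n+1}/E_n is finite of degree [E_{n+1} : E_n] = t; (iv) either d ≥ t or gcd(d, t) = 1. Then for every n the inclusion E_n ⊆ F_n is strict; equivalently, [F_n : E_n] ≥ 2 for all n. -/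
/-- The degree `[B : A]` of one subfield of `Ω` over another, computed as the dimension of
`B` as a vector space over the copy `A.comap B.subtype` of `A` inside `B`
(this copy is just `A` itself when `A ≤ B`). -/
noncomputable def Subfield.relDeg {Ω : Type*} [Field Ω] (A B : Subfield Ω) : ℕ :=
  Module.finrank (A.comap B.subtype) B

/-- `B` is a finite (finite-dimensional) extension of `A`. -/
def Subfield.RelFinite {Ω : Type*} [Field Ω] (A B : Subfield Ω) : Prop :=
  FiniteDimensional (A.comap B.subtype) B

/-!
Counting degrees over `E₀` along the two routes `E₀ ⊆ Eₙ ⊆ Fₙ` and `E₀ ⊆ F₀ ⊆ Fₙ` gives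
`tⁿ · [Fₙ : Eₙ] = [F₀ : E₀] · dⁿ`. If `[Fₙ : Eₙ] = 1`, then `tⁿ ≥ 2 dⁿ`, which is impossible
when `t ≤ d`, and forces `dⁿ ∣ tⁿ`, hence `n = 0`, when `d` and `t` are coprime.
-/

theorem Nat.two_le_of_pow_mul_eq_mul_pow {t d r c n : ℕ} (h : t ^ n * r = c * d ^ n)
    (hc : 2 ≤ c) (hd : 2 ≤ d) (hdt : t ≤ d ∨ Nat.Coprime d t) : 2 ≤ r := by
  have hdn : 0 < d ^ n := Nat.pow_pos (by omega)
  have hr0 : r ≠ 0 := by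
    rintro rfl
    nlinarith
  have hr1 : r ≠ 1 := by
    rintro rfl
    rw [mul_one] at h
    rcases hdt with htd | hcop
    · have : t ^ n ≤ d ^ n := Nat.pow_le_pow_left htd n
      nlinarith
    · have hdn1 : d ^ n = 1 :=
        Nat.Coprime.eq_one_of_dvd (hcop.pow n n) (Dvd.intro_left c h.symm)
      obtain rfl : n = 0 := by
        by_contra hn
        exact (Nat.one_lt_pow hn (by omega : 1 < d)).ne' hdn1
      simp only [pow_zero, mul_one] at h
      omega
  omega

namespace Subfield

variable {Ω : Type*} [Field Ω]

theorem relDeg_eq_relfinrank (A B : Subfield Ω) : A.relDeg B = A.relfinrank B := by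
  rw [relDeg, finrank_comap, fieldRange_subtype]

theorem relfinrank_eq_pow_of_succ {K : ℕ → Subfield Ω} (hK : Monotone K) {d : ℕ}
    (hd : ∀ n, (K n).relfinrank (K (n + 1)) = d) (n : ℕ) :
    (K 0).relfinrank (K n) = d ^ n := by
  induction n with
  | zero => exact relfinrank_self _
  | succ n ih =>
    rw [← relfinrank_mul_relfinrank (hK n.zero_le) (hK n.le_succ), ih, hd, pow_succ]

theorem relfinrank_mul_relfinrank_eq {A B C D : Subfield Ω} (hAB : A ≤ B) (hBD : B ≤ D)
    (hAC : A ≤ C) (hCD : C ≤ D) :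
    A.relfinrank B * B.relfinrank D = A.relfinrank C * C.relfinrank D := by
  rw [relfinrank_mul_relfinrank hAB hBD, relfinrank_mul_relfinrank hAC hCD]

end Subfield

theorem subtower_is_proper_general {Ω : Type*} [Field Ω] (E F : ℕ → Subfield Ω)
    (hEF : ∀ n, E n ≤ F n) (hE : ∀ n, E n ≤ E (n + 1)) (hF : ∀ n, F n ≤ F (n + 1))
    (d t : ℕ) (hd : 2 ≤ d)
    (h0 : 2 ≤ (E 0).relDeg (F 0))
    (hFdeg : ∀ n, (F n).relDeg (F (n + 1)) = d)
    (hEdeg : ∀ n, (E n).relDeg (E (n + 1)) = t)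
    (hdt : t ≤ d ∨ Nat.gcd d t = 1) :
    ∀ n, E n < F n ∧ 2 ≤ (E n).relDeg (F n) := by
  simp only [Subfield.relDeg_eq_relfinrank] at h0 hFdeg hEdeg ⊢
  have hEmono : Monotone E := monotone_nat_of_le_succ hE
  have hFmono : Monotone F := monotone_nat_of_le_succ hF
  intro n
  have hdeg : t ^ n * (E n).relfinrank (F n) = (E 0).relfinrank (F 0) * d ^ n := by
    rw [← Subfield.relfinrank_eq_pow_of_succ hEmono hEdeg,
      ← Subfield.relfinrank_eq_pow_of_succ hFmono hFdeg]
    exact Subfield.relfinrank_mul_relfinrank_eq (hEmono n.zero_le) (hEF n) (hEF 0)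
      (hFmono n.zero_le)
  have hr : 2 ≤ (E n).relfinrank (F n) := Nat.two_le_of_pow_mul_eq_mul_pow hdeg h0 hd hdt
  refine ⟨lt_of_le_not_ge (hEF n) fun hFE => ?_, hr⟩
  rw [(Subfield.relfinrank_eq_one_iff).2 hFE] at hr
  omega

/-- **Theorem 3.1 (abstract form).**  Let `(Eₙ)` and `(Fₙ)` be two increasing sequences of
subfields of a field `Ω` with `Eₙ ⊆ Fₙ` for all `n`.  If `F₀/E₀` is finite of degree `≥ 2`,
every step `Fₙ₊₁/Fₙ` is finite of degree `d ≥ 2`, every step `Eₙ₊₁/Eₙ` is finite of degree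
`t ≥ 2`, and either `d ≥ t` or `gcd(d, t) = 1`, then `Eₙ ⊊ Fₙ` for every `n`;
equivalently `[Fₙ : Eₙ] ≥ 2` for all `n`. -/
theorem subtower_is_proper {Ω : Type*} [Field Ω] (E F : ℕ → Subfield Ω)
    (hEF : ∀ n, E n ≤ F n) (hE : ∀ n, E n ≤ E (n + 1)) (hF : ∀ n, F n ≤ F (n + 1))
    (d t : ℕ) (hd : 2 ≤ d) (ht : 2 ≤ t)
    (h0fin : (E 0).RelFinite (F 0)) (h0 : 2 ≤ (E 0).relDeg (F 0))
    (hFfin : ∀ n, (F n).RelFinite (F (n + 1)))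
    (hFdeg : ∀ n, (F n).relDeg (F (n + 1)) = d)
    (hEfin : ∀ n, (E n).RelFinite (E (n + 1)))
    (hEdeg : ∀ n, (E n).relDeg (E (n + 1)) = t)
    (hdt : t ≤ d ∨ Nat.gcd d t = 1) :
    ∀ n, E n < F n ∧ 2 ≤ (E n).relDeg (F n) :=
  subtower_is_proper_general E F hEF hE hF d t hd h0 hFdeg hEdeg hdt
end

section
/- Let K be a field, Ω a field extension of K, and x ∈ Ω transcendental over K. Let h₁, h₂ ∈ K[X] be coprime polynomials with h₂ ≠ 0 and max(deg h₁, deg h₂) ≥ 2, and set z = h₁(x) / h₂(x) ∈ Ω (note h₂(x) ≠ 0 since x is transcendental). Then x does not belong to the intermediate field K(z) generated by z over K; in particular K(z) is a proper subfield of K(x). -/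
/-!
Since `x` is transcendental, `K(x)` is a copy of the rational function field `K(X)` in which `z`
corresponds to `f = h₁ / h₂`. If `X` lay in `K(f)`, then `K(f) = K(X)`; but
`[K(X) : K(f)] = max (deg f.num) (deg f.denom)`, and coprimality makes `h₁, h₂` associates of
`f.num, f.denom`, so this degree is `max (deg h₁) (deg h₂) ≥ 2`.
-/

open Polynomial IntermediateField

namespace RatFunc

variable {K : Type*} [Field K] {p q : K[X]}

theorem associated_num_div (hpq : IsCoprime p q) (hq : q ≠ 0) :
    Associated (algebraMap K[X] K⟮X⟯ p / algebraMap K[X] K⟮X⟯ q).num p := by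
  set f := algebraMap K[X] K⟮X⟯ p / algebraMap K[X] K⟮X⟯ q
  have h : f.num * q = p * f.denom := (num_mul_eq_mul_denom_iff hq).mpr rfl
  exact associated_of_dvd_dvd (f.isCoprime_num_denom.dvd_of_dvd_mul_right ⟨q, h.symm⟩)
    (hpq.dvd_of_dvd_mul_right ⟨f.denom, h⟩)

theorem associated_denom_div (hpq : IsCoprime p q) (hq : q ≠ 0) :
    Associated (algebraMap K[X] K⟮X⟯ p / algebraMap K[X] K⟮X⟯ q).denom q := by
  set f := algebraMap K[X] K⟮X⟯ p / algebraMap K[X] K⟮X⟯ q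
  have h : f.num * q = p * f.denom := (num_mul_eq_mul_denom_iff hq).mpr rfl
  exact associated_of_dvd_dvd
    (f.isCoprime_num_denom.symm.dvd_of_dvd_mul_left ⟨p, by linear_combination h⟩)
    (hpq.symm.dvd_of_dvd_mul_left ⟨f.num, by linear_combination -h⟩)

theorem finrank_adjoin_div_of_isCoprime (hpq : IsCoprime p q) (hq : q ≠ 0) :
    Module.finrank K⟮algebraMap K[X] K⟮X⟯ p / algebraMap K[X] K⟮X⟯ q⟯ K⟮X⟯ =
      max p.natDegree q.natDegree := by
  rw [finrank_eq_max_natDegree,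
    natDegree_eq_of_degree_eq (degree_eq_degree_of_associated (associated_num_div hpq hq)),
    natDegree_eq_of_degree_eq (degree_eq_degree_of_associated (associated_denom_div hpq hq))]

theorem X_notMem_adjoin_simple {f : K⟮X⟯} (hf : 2 ≤ Module.finrank K⟮f⟯ K⟮X⟯) :
    (X : K⟮X⟯) ∉ K⟮f⟯ := by
  intro hX
  have htop : K⟮f⟯ = ⊤ := eq_top_iff.mpr (adjoin_X.symm.le.trans (adjoin_simple_le_iff.mpr hX))
  rw [finrank_eq_one_iff_eq_top.mpr htop] at hf
  omega

end RatFunc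

theorem IntermediateField.apply_mem_adjoin_simple_iff {F E E' : Type*} [Field F] [Field E]
    [Field E'] [Algebra F E] [Algebra F E'] (φ : E →ₐ[F] E') (a b : E) :
    φ a ∈ F⟮φ b⟯ ↔ a ∈ F⟮b⟯ := by
  rw [← Set.image_singleton, ← adjoin_map, mem_map]
  exact ⟨fun ⟨c, hc, hca⟩ ↦ φ.injective hca ▸ hc, fun ha ↦ ⟨a, ha, rfl⟩⟩

/-- **Base case of Theorem 3.1.**  If `x` is transcendental over `K` and
`z = h₁(x)/h₂(x)` for coprime polynomials `h₁, h₂ ∈ K[X]` with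
`max(deg h₁, deg h₂) ≥ 2`, then `x ∉ K(z)`; in particular `K(z) ⊊ K(x)`. -/
theorem transcendental_rat_function_proper_subfield
    {K Ω : Type*} [Field K] [Field Ω] [Algebra K Ω]
    (x : Ω) (hx : Transcendental K x)
    (h₁ h₂ : Polynomial K) (hcop : IsCoprime h₁ h₂) (hh₂ : h₂ ≠ 0)
    (hdeg : 2 ≤ max h₁.natDegree h₂.natDegree)
    (z : Ω) (hz : z = aeval x h₁ / aeval x h₂) :
    x ∉ IntermediateField.adjoin K {z} ∧
      IntermediateField.adjoin K {z} < IntermediateField.adjoin K {x} := by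
  set f : RatFunc K := algebraMap K[X] (RatFunc K) h₁ / algebraMap K[X] (RatFunc K) h₂
  set e := RatFunc.algEquivOfTranscendental x hx
  let ψ : RatFunc K →ₐ[K] Ω := K⟮x⟯.val.comp e.toAlgHom
  have hψX : ψ RatFunc.X = x := by simp [ψ, e]
  have hψf : ψ f = z := by simp [ψ, e, f, hz]
  have hxz : x ∉ K⟮z⟯ := by
    rw [← hψX, ← hψf, apply_mem_adjoin_simple_iff]
    exact RatFunc.X_notMem_adjoin_simple (RatFunc.finrank_adjoin_div_of_isCoprime hcop hh₂ ▸ hdeg)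
  refine ⟨hxz, lt_of_le_of_ne ?_ fun h ↦ hxz (h ▸ mem_adjoin_simple_self K x)⟩
  rw [adjoin_simple_le_iff, ← hψf]
  exact (e f).2
end

section
/- Let K be a field of characteristic 2 and let X denote the generator of the field of rational functions RatFunc K. Set b = (X² + X + 1)/X and u = (b + 1)/b, and set a = X² + X and s = (a + 1)/a. Then u³ + u = (X⁴ + X²)/(X⁶ + X⁵ + X³ + X + 1) and (s + 1)/s³ = (X⁴ + X²)/(X⁶ + X⁵ + X³ + X + 1); in particular u³ + u = (s + 1)/s³. -/
/-!
With `f(T) = (T + 1)/T` one has `f(T) + 1 = 1/T` in characteristic 2, so `u³ + u = u (u + 1)²`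
collapses to `(b + 1)/b³` and `(s + 1)/s³` to `a²/(a + 1)³`. For `b = (a + 1)/X` with
`a = X(X + 1)` both equal `X²(X + 1)²/(X² + X + 1)³`, and the stated right-hand side is this
fraction with numerator and denominator expanded mod 2.
-/

section CharTwo

variable {F : Type*} [Field F] [CharP F 2]

theorem add_one_div_cube_add_self {x : F} (hx : x ≠ 0) :
    ((x + 1) / x) ^ 3 + (x + 1) / x = (x + 1) / x ^ 3 := by
  field_simp
  linear_combination (x ^ 2 + 2 * x + 1) * x * CharTwo.two_eq_zero (R := F)

theorem add_one_div_add_one_div_cube {x : F} (hx : x ≠ 0) (hx1 : x + 1 ≠ 0) :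
    ((x + 1) / x + 1) / ((x + 1) / x) ^ 3 = x ^ 2 / (x + 1) ^ 3 := by
  field_simp
  linear_combination x * CharTwo.two_eq_zero (R := F)

end CharTwo

namespace RatFunc

variable {K : Type*} [Field K]

theorem X_add_one_ne_zero : (X + 1 : RatFunc K) ≠ 0 := by
  simpa using algebraMap_ne_zero (K := K) (Polynomial.X_add_C_ne_zero 1)

theorem X_sq_add_X_add_one_ne_zero : (X ^ 2 + X + 1 : RatFunc K) ≠ 0 := by
  have h : (Polynomial.X ^ 2 + Polynomial.X + 1 : Polynomial K) ≠ 0 := fun h => by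
    simpa using congrArg (Polynomial.coeff · 0) h
  simpa using algebraMap_ne_zero (K := K) h

end RatFunc

open RatFunc in
/-- **Functional equation of Example 3.**  In `RatFunc K`, `K` of characteristic 2, with
`b = (X² + X + 1)/X`, `u = (b + 1)/b`, `a = X² + X` and `s = (a + 1)/a`, both
`u³ + u` and `(s + 1)/s³` equal `(X⁴ + X²)/(X⁶ + X⁵ + X³ + X + 1)`;
in particular `u³ + u = (s + 1)/s³`. -/
theorem artin_schreier_subtower_functional_equation {K : Type*} [Field K] [CharP K 2]
    (b u a s : RatFunc K)
    (hb : b = (RatFunc.X ^ 2 + RatFunc.X + 1) / RatFunc.X)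
    (hu : u = (b + 1) / b)
    (ha : a = RatFunc.X ^ 2 + RatFunc.X)
    (hs : s = (a + 1) / a) :
    u ^ 3 + u = (RatFunc.X ^ 4 + RatFunc.X ^ 2) /
        (RatFunc.X ^ 6 + RatFunc.X ^ 5 + RatFunc.X ^ 3 + RatFunc.X + 1) ∧
      (s + 1) / s ^ 3 = (RatFunc.X ^ 4 + RatFunc.X ^ 2) /
        (RatFunc.X ^ 6 + RatFunc.X ^ 5 + RatFunc.X ^ 3 + RatFunc.X + 1) ∧
      u ^ 3 + u = (s + 1) / s ^ 3 := by
  have hX : (X : RatFunc K) ≠ 0 := X_ne_zero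
  have hX2 : (X ^ 2 + X + 1 : RatFunc K) ≠ 0 := X_sq_add_X_add_one_ne_zero
  have two : (2 : RatFunc K) = 0 := CharTwo.two_eq_zero
  have hrhs : (X ^ 4 + X ^ 2) / (X ^ 6 + X ^ 5 + X ^ 3 + X + 1 : RatFunc K) =
      (X ^ 2 + X) ^ 2 / (X ^ 2 + X + 1) ^ 3 := by
    congr 1
    · linear_combination (-X ^ 3) * two
    · linear_combination (-X ^ 5 - 3 * X ^ 4 - 3 * X ^ 3 - 3 * X ^ 2 - X) * two
  have hu' : u ^ 3 + u = (X ^ 2 + X) ^ 2 / (X ^ 2 + X + 1) ^ 3 := by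
    rw [hu, add_one_div_cube_add_self (hb ▸ div_ne_zero hX2 hX), hb]
    field_simp
    ring
  have hs' : (s + 1) / s ^ 3 = (X ^ 2 + X) ^ 2 / (X ^ 2 + X + 1) ^ 3 := by
    have ha0 : a ≠ 0 := by
      rw [ha, sq, ← mul_add_one]
      exact mul_ne_zero hX X_add_one_ne_zero
    rw [hs, add_one_div_add_one_div_cube ha0 (ha ▸ hX2), ha]
  rw [hrhs]
  exact ⟨hu', hs', hu'.trans hs'.symm⟩
end

section
/- Let L be a field of characteristic 2, let v be an additive valuation on L with values in WithTop ℤ, and let x, y ∈ L with x ≠ 0 and y² + y/x = (1 + x²)/x². Then 2·v(y + 1) + 2·v(x) ≥ min(v(y) + v(x), 0). -/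
/-!
Multiplying the equation by `x²` and using characteristic 2 gives `((y + 1) x)² = y x + 1`;
the ultrametric inequality applied to the right-hand side is the claim.
-/

-- `WithTop ℤ` is not a semiring, so `two_mul` does not apply to it.
theorem WithTop.int_two_mul (a : WithTop ℤ) : 2 * a = a + a := by
  induction a using WithTop.recTopCoe with
  | top => simp
  | coe n => rw [← WithTop.coe_ofNat, ← WithTop.coe_mul, ← WithTop.coe_add, two_mul]

theorem add_one_mul_sq_eq_of_sq_add_div_eq {L : Type*} [Field L] [CharP L 2] {x y : L}
    (hx : x ≠ 0) (hxy : y ^ 2 + y / x = (1 + x ^ 2) / x ^ 2) :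
    ((y + 1) * x) ^ 2 = y * x + 1 := by
  have h2 : (2 : L) = 0 := CharTwo.two_eq_zero
  have hcleared : y ^ 2 * x ^ 2 + y * x = 1 + x ^ 2 := by
    field_simp at hxy
    linear_combination hxy
  linear_combination hcleared + (y * x ^ 2 + x ^ 2 - y * x) * h2

/-- **Equation (5.4) of Section 5.**  Let `v` be an additive valuation on a field `L` of
characteristic 2, and let `x, y ∈ L` with `x ≠ 0` and `y² + y/x = (1 + x²)/x²`.  Then
`2·v(y + 1) + 2·v(x) ≥ min(v(y) + v(x), 0)`. -/
theorem valuation_inequality_eq54 {L : Type*} [Field L] [CharP L 2]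
    (v : AddValuation L (WithTop ℤ)) (x y : L) (hx : x ≠ 0)
    (hxy : y ^ 2 + y / x = (1 + x ^ 2) / x ^ 2) :
    min (v y + v x) 0 ≤ 2 * v (y + 1) + 2 * v x := by
  calc min (v y + v x) 0 = min (v (y * x)) (v 1) := by rw [v.map_mul, v.map_one]
    _ ≤ v (y * x + 1) := v.map_add _ _
    _ = 2 • v ((y + 1) * x) := by rw [← add_one_mul_sq_eq_of_sq_add_div_eq hx hxy, v.map_pow]
    _ = 2 * v (y + 1) + 2 * v x := by
      rw [two_nsmul, v.map_mul, WithTop.int_two_mul, WithTop.int_two_mul, add_add_add_comm]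
end
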